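/- The elimination-step invariant is preserved: if after i steps of elimination every remaining function has scope contained in {0..<n} minus the already-eliminated variables O({0..<i}), and the maximum over assignments to the remaining variables of the sum of remaining functions equals the original maximum, then the same invariant holds after step i+1. -/

import Mathlib

open BigOperators

variable {n : ℕ}

/-- One step of variable elimination: eliminate variable `l` by replacing all functions whose
scope contains `l` by a single new function maximizing their sum over `D l`. -/
noncomputable def elimStep (D : Fin n → Type*) [∀ i, Fintype (D i)] [∀ i, Nonempty (D i)]
    (l : Fin n) (fs : List ((((i : Fin n) → D i) → ℝ) × Finset (Fin n))) :
    List ((((i : Fin n) → D i) → ℝ) × Finset (Fin n)) :=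
  let E := fs.filter (fun f => l ∈ f.2)
  let E' := fs.filter (fun f => l ∉ f.2)
  ((fun x => ⨆ y : D l, ((E.map (fun f => f.1 (Function.update x l y))).sum)),
    (E.foldr (fun (f : (((i : Fin n) → D i) → ℝ) × Finset (Fin n)) s => f.2 ∪ s) ∅).erase l)
    :: E'

/-- The elimination invariant after `i` steps: every remaining function is properly scoped,
its scope avoids the already-eliminated variables `O '' {0..<i}`, and the maximum of the sum
of the remaining functions equals the original maximum. -/
def ElimInvar (D : Fin n → Type*) [∀ i, Fintype (D i)] [∀ i, Nonempty (D i)]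
    (O : Fin n → Fin n)
    (fs0 fs : List ((((i : Fin n) → D i) → ℝ) × Finset (Fin n))) (i : ℕ) : Prop :=
  (∀ f ∈ fs, ∀ x y : (j : Fin n) → D j, (∀ j ∈ f.2, x j = y j) → f.1 x = f.1 y) ∧
  (∀ f ∈ fs, ∀ j ∈ f.2, ∀ k : Fin n, (k : ℕ) < i → O k ≠ j) ∧
  ((⨆ x : (j : Fin n) → D j, ((fs.map (fun f => f.1 x)).sum)) =
    ⨆ x : (j : Fin n) → D j, ((fs0.map (fun f => f.1 x)).sum))

/-! Eliminating `l` replaces the functions whose scope contains `l` by the maximum over `D l` of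
their sum. The other functions do not depend on `l`, so the new total at `x` is the maximum over
`y` of the old total at `update x l y`, and maximizing over `x` as well gives back the old maximum.
The new scope is the union of the old scopes minus `l`, so it avoids the variables eliminated
before and also `l = O i`. -/

open Function Set

lemma List.mem_foldr_union_snd {α β : Type*} [DecidableEq β] (E : List (α × Finset β))
    (j : β) :
    j ∈ E.foldr (fun f s => f.2 ∪ s) ∅ ↔ ∃ f ∈ E, j ∈ f.2 := by
  induction E with
  | nil => simp
  | cons a E ih => simp [ih]

lemma ciSup_add_const {ι G : Type*} [Nonempty ι] [ConditionallyCompleteLattice G] [AddGroup G]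
    [AddRightMono G] {f : ι → G} (hf : BddAbove (range f)) (c : G) :
    (⨆ i, f i) + c = ⨆ i, (f i + c) :=
  (OrderIso.addRight c).map_ciSup hf

section

variable {ι : Type*} {α : ι → Type*}

lemma DependsOn.apply_update_of_notMem [DecidableEq ι] {β : Type*} {f : (Π i, α i) → β}
    {s : Set ι} (hf : DependsOn f s) {l : ι} (hl : l ∉ s) (x : Π i, α i) (y : α l) :
    f (Function.update x l y) = f x :=
  hf fun _ hj => update_of_ne (ne_of_mem_of_not_mem hj hl) y x

lemma dependsOn_iSup {κ β : Type*} [SupSet β] {g : κ → (Π i, α i) → β} {s : Set ι}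
    (hg : ∀ k, DependsOn (g k) s) : DependsOn (fun x => ⨆ k, g k x) s :=
  fun _ _ hxy => congrArg iSup (funext fun k => hg k hxy)

lemma List.dependsOn_sum_map [DecidableEq ι] {M : Type*} [AddCommMonoid M]
    (E : List (((Π i, α i) → M) × Finset ι)) (hE : ∀ f ∈ E, DependsOn f.1 f.2) :
    DependsOn (fun x => (E.map fun f => f.1 x).sum)
      ((E.foldr (fun f s => f.2 ∪ s) ∅ : Finset ι) : Set ι) := by
  induction E with
  | nil => simp [DependsOn]
  | cons f E ih =>
    intro x y hxy
    simp only [List.map_cons, List.sum_cons]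
    simp only [List.foldr_cons, Finset.coe_union, mem_union, Finset.mem_coe] at hxy
    exact congrArg₂ (· + ·) (hE f (List.mem_cons_self ..) fun j hj => hxy j (Or.inl hj))
      (ih (fun g hg => hE g (List.mem_cons_of_mem _ hg)) fun j hj => hxy j (Or.inr hj))

lemma ciSup_ciSup_update [DecidableEq ι] [∀ i, Nonempty (α i)] {γ : Type*}
    [ConditionallyCompleteLattice γ] {F : (Π i, α i) → γ} (hF : BddAbove (range F)) (l : ι) :
    ⨆ x, ⨆ y : α l, F (update x l y) = ⨆ x, F x := by
  have hinner : ∀ x, BddAbove (range fun y : α l => F (update x l y)) :=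
    fun x => hF.mono (range_comp_subset_range _ F)
  refine le_antisymm (ciSup_le fun x => ciSup_le fun y => le_ciSup hF _) (ciSup_le fun x => ?_)
  have houter : BddAbove (range fun x => ⨆ y : α l, F (update x l y)) :=
    ⟨⨆ x, F x, forall_mem_range.2 fun x => ciSup_le fun y => le_ciSup hF _⟩
  calc F x = F (update x l (x l)) := by rw [update_eq_self]
    _ ≤ ⨆ y : α l, F (update x l y) := le_ciSup (hinner x) (x l)
    _ ≤ ⨆ x, ⨆ y : α l, F (update x l y) := le_ciSup houter x

end

section ElimStep

variable {D : Fin n → Type*} [∀ i, Fintype (D i)] [∀ i, Nonempty (D i)]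
  {fs : List ((((i : Fin n) → D i) → ℝ) × Finset (Fin n))} {l : Fin n}

lemma mem_scope_of_mem_elimStep {f : (((i : Fin n) → D i) → ℝ) × Finset (Fin n)}
    (hf : f ∈ elimStep D l fs) {j : Fin n} (hj : j ∈ f.2) :
    j ≠ l ∧ ∃ g ∈ fs, j ∈ g.2 := by
  rcases List.mem_cons.1 hf with rfl | hf
  · obtain ⟨hjl, g, hg, hjg⟩ :=
      (Finset.mem_erase.1 hj).imp_right (List.mem_foldr_union_snd _ j).1
    exact ⟨hjl, g, (List.mem_filter.1 hg).1, hjg⟩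
  · obtain ⟨hffs, hlf⟩ := List.mem_filter.1 hf
    exact ⟨fun hjl => of_decide_eq_true hlf (hjl ▸ hj), f, hffs, hj⟩

lemma dependsOn_of_mem_elimStep (hfs : ∀ f ∈ fs, DependsOn f.1 f.2) :
    ∀ f ∈ elimStep D l fs, DependsOn f.1 f.2 := by
  intro f hf
  rcases List.mem_cons.1 hf with rfl | hf
  · exact dependsOn_iSup fun y =>
      (List.dependsOn_sum_map _ fun g hg => hfs g (List.mem_filter.1 hg).1).update l y
  · exact hfs f (List.mem_filter.1 hf).1

lemma sum_elimStep_apply (hfs : ∀ f ∈ fs, DependsOn f.1 f.2) (x : (i : Fin n) → D i) :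
    ((elimStep D l fs).map fun f => f.1 x).sum
      = ⨆ y : D l, (fs.map fun f => f.1 (update x l y)).sum := by
  have hconst : ∀ y : D l, ((fs.filter fun f => l ∉ f.2).map fun f => f.1 (update x l y)).sum
      = ((fs.filter fun f => l ∉ f.2).map fun f => f.1 x).sum := by
    intro y
    refine congrArg _ (List.map_congr_left fun g hg => ?_)
    obtain ⟨hgfs, hlg⟩ := List.mem_filter.1 hg
    exact (hfs g hgfs).apply_update_of_notMem (by simpa using hlg) x y
  rw [elimStep, List.map_cons, List.sum_cons, ciSup_add_const (finite_range _).bddAbove]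
  refine congrArg _ (funext fun y => ?_)
  rw [← hconst y]
  exact List.sum_map_filter_add_sum_map_filter_not (fun f => l ∈ f.2)
    (fun f => f.1 (update x l y)) fs

lemma ciSup_sum_elimStep (hfs : ∀ f ∈ fs, DependsOn f.1 f.2) :
    ⨆ x : (i : Fin n) → D i, ((elimStep D l fs).map fun f => f.1 x).sum
      = ⨆ x : (i : Fin n) → D i, (fs.map fun f => f.1 x).sum := by
  simp only [sum_elimStep_apply hfs]
  exact ciSup_ciSup_update
    (finite_range fun x : (i : Fin n) → D i => (fs.map fun f => f.1 x).sum).bddAbove l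

end ElimStep

theorem elim_invar_preserved_general (D : Fin n → Type*)
    [∀ i, Fintype (D i)] [∀ i, Nonempty (D i)]
    (O : Fin n → Fin n)
    (fs0 fs : List ((((i : Fin n) → D i) → ℝ) × Finset (Fin n)))
    (i : ℕ) (hi : i < n)
    (hinv : ElimInvar D O fs0 fs i) :
    ElimInvar D O fs0 (elimStep D (O ⟨i, hi⟩) fs) (i + 1) := by
  obtain ⟨hscoped, havoid, hmax⟩ := hinv
  have hdep : ∀ f ∈ fs, DependsOn f.1 f.2 := fun f hf x y => hscoped f hf x y
  refine ⟨fun f hf x y hxy => dependsOn_of_mem_elimStep hdep f hf hxy, ?_,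
    (ciSup_sum_elimStep hdep).trans hmax⟩
  intro f hf j hj k hk
  obtain ⟨hjl, g, hg, hjg⟩ := mem_scope_of_mem_elimStep hf hj
  rcases Nat.lt_succ_iff_lt_or_eq.1 hk with hk | hk
  · exact havoid g hg j hjg k hk
  · obtain rfl : k = ⟨i, hi⟩ := Fin.ext hk
    exact hjl.symm

/-- the elimination-step invariant is preserved: if it holds after `i` steps,
it holds after step `i + 1`. -/
theorem elim_invar_preserved (D : Fin n → Type*)
    [∀ i, Fintype (D i)] [∀ i, Nonempty (D i)]
    (O : Fin n → Fin n) (hO : Function.Bijective O)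
    (fs0 fs : List ((((i : Fin n) → D i) → ℝ) × Finset (Fin n)))
    (i : ℕ) (hi : i < n)
    (hinv : ElimInvar D O fs0 fs i) :
    ElimInvar D O fs0 (elimStep D (O ⟨i, hi⟩) fs) (i + 1) :=
  elim_invar_preserved_general D O fs0 fs i hi hinv
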